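/- arXiv:1711.02291 — 2 statements merged into one kernel-verified Lean document; each statement's English description precedes it below -/
import Mathlib

section
/- Let B = {|i⟩}_{i=1}^d be an orthonormal basis of ℂ^d with projectors P_i = |i⟩⟨i|, and let B' = {Π_k}_{k=1}^r be a complete family of orthogonal projectors on ℂ^d (Π_k = Π_k†, Π_kΠ_l = δ_{kl}Π_k, ∑_k Π_k = I), with partial dephasing superoperator D_{B'}(X) = ∑_k Π_k X Π_k. Define the d×d matrix Z by Z_{ij} = Tr( ∑_{k=1}^r P_i Π_k P_j Π_k ). Then Z is a real symmetric matrix, and ∑_{i=1}^d ( ⟨D_{B'}(P_i), D_{B'}(P_i)⟩ − ⟨D_B(D_{B'}(P_i)), D_B(D_{B'}(P_i))⟩ ) = Tr[ Z ( I − Z ) ]; in particular, the 2-norm coherence generating power of D_{B'} with respect to B equals (1/(d(d+1))) · Tr[ Z ( I − Z ) ]. -/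
open Matrix BigOperators

/-- The rank-one projector `|v i⟩⟨v i|`. -/
noncomputable def rankOneProj {d : ℕ} (v : Fin d → (Fin d → ℂ)) (i : Fin d) :
    Matrix (Fin d) (Fin d) ℂ :=
  Matrix.vecMulVec (v i) (star (v i))

/-- The dephasing superoperator `D_B(X) = ∑ i, P_i X P_i`, `P_i = |v i⟩⟨v i|`. -/
noncomputable def dephase {d : ℕ} (v : Fin d → (Fin d → ℂ))
    (X : Matrix (Fin d) (Fin d) ℂ) : Matrix (Fin d) (Fin d) ℂ :=
  ∑ i, rankOneProj v i * X * rankOneProj v i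

/-- The partial dephasing superoperator `D_{B'}(X) = ∑ k, Π_k X Π_k` of a complete family
of orthogonal projectors `{Π_k}`. -/
noncomputable def partialDephase {d r : ℕ} (Q : Fin r → Matrix (Fin d) (Fin d) ℂ)
    (X : Matrix (Fin d) (Fin d) ℂ) : Matrix (Fin d) (Fin d) ℂ :=
  ∑ k, Q k * X * Q k

/-- The matrix `Z_{ij} = Tr(∑ k, P_i Π_k P_j Π_k)`. -/
noncomputable def zMat {d r : ℕ} (v : Fin d → (Fin d → ℂ))
    (Q : Fin r → Matrix (Fin d) (Fin d) ℂ) : Matrix (Fin d) (Fin d) ℂ :=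
  Matrix.of fun i j => (∑ k, rankOneProj v i * Q k * rankOneProj v j * Q k).trace

/-!
A pinching `X ↦ ∑ k, Π_k X Π_k` by mutually orthogonal Hermitian projectors is an orthogonal
projection for the Hilbert–Schmidt inner product, so `⟨Φ X, Φ X⟩ = ⟨X, Φ X⟩`. Dephasing in `B` is
the pinching by the `P_i`. Hence the first term for `P_i` is `Tr(P_i D_{B'}(P_i)) = Z_ii`, and the
second is `∑ j, Tr(P_j D_{B'}(P_i))² = ∑ j, Z_ij Z_ji`; summing over `i` gives `Tr Z - Tr Z²`.
Reality and symmetry of `Z` come from `Z_ij = ∑ k, |⟨i|Π_k|j⟩|²`.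
-/

namespace Matrix

variable {n α : Type*} [Fintype n]

theorem trace_vecMulVec_mul [CommSemiring α] (x y : n → α) (A : Matrix n n α) :
    (vecMulVec x y * A).trace = y ⬝ᵥ A *ᵥ x := by
  rw [trace_mul_comm, mul_vecMulVec, trace_vecMulVec, dotProduct_comm]

theorem trace_vecMulVec_mul_vecMulVec_mul [CommSemiring α] (x y z w : n → α)
    (A B : Matrix n n α) :
    (vecMulVec x y * A * vecMulVec z w * B).trace = (y ⬝ᵥ A *ᵥ z) * (w ⬝ᵥ B *ᵥ x) := by
  rw [vecMulVec_mul, vecMulVec_mul_vecMulVec, vecMulVec_smul, Matrix.smul_mul, trace_smul,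
    trace_vecMulVec_mul, ← dotProduct_mulVec, smul_eq_mul]

theorem star_star_dotProduct_mulVec [CommSemiring α] [StarRing α] (A : Matrix n n α)
    (x y : n → α) : star (star x ⬝ᵥ A *ᵥ y) = star y ⬝ᵥ Aᴴ *ᵥ x := by
  rw [star_dotProduct, star_star, star_mulVec, dotProduct_mulVec]

theorem trace_mul_one_sub [DecidableEq n] [Ring α] (A : Matrix n n α) :
    (A * (1 - A)).trace = ∑ i, (A i i - ∑ j, A i j * A j i) := by
  simp [mul_sub, trace, mul_apply, Finset.sum_sub_distrib]

end Matrix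

open Matrix

section PartialDephase

variable {d r : ℕ} {Q : Fin r → Matrix (Fin d) (Fin d) ℂ}

theorem conjTranspose_partialDephase (hQ : ∀ k, (Q k)ᴴ = Q k) (X : Matrix (Fin d) (Fin d) ℂ) :
    (partialDephase Q X)ᴴ = partialDephase Q Xᴴ := by
  simp [partialDephase, conjTranspose_sum, hQ, Matrix.mul_assoc]

theorem mul_partialDephase_mul (hQ : ∀ k l, Q k * Q l = if k = l then Q k else 0)
    (X : Matrix (Fin d) (Fin d) ℂ) (k : Fin r) :
    Q k * partialDephase Q X * Q k = Q k * X * Q k := by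
  simp only [partialDephase, Finset.mul_sum, Finset.sum_mul, ← Matrix.mul_assoc]
  simp [Matrix.mul_assoc _ _ (Q k), hQ]

theorem trace_partialDephase_mul_partialDephase
    (hQ : ∀ k l, Q k * Q l = if k = l then Q k else 0) (A B : Matrix (Fin d) (Fin d) ℂ) :
    (partialDephase Q A * partialDephase Q B).trace = (A * partialDephase Q B).trace := by
  calc (partialDephase Q A * partialDephase Q B).trace
      = ∑ k, (Q k * A * Q k * partialDephase Q B).trace := by
        rw [partialDephase.eq_1 Q A, Finset.sum_mul, trace_sum]
    _ = ∑ k, (A * (Q k * B * Q k)).trace := by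
        refine Finset.sum_congr rfl fun k _ => ?_
        rw [← mul_partialDephase_mul hQ B k, Matrix.mul_assoc, Matrix.mul_assoc, trace_mul_comm,
          Matrix.mul_assoc]
    _ = (A * partialDephase Q B).trace := by
        rw [partialDephase.eq_1 Q B, Finset.mul_sum, trace_sum]

theorem trace_conjTranspose_partialDephase_mul_self (hherm : ∀ k, (Q k)ᴴ = Q k)
    (horth : ∀ k l, Q k * Q l = if k = l then Q k else 0) (X : Matrix (Fin d) (Fin d) ℂ) :
    ((partialDephase Q X)ᴴ * partialDephase Q X).trace = (Xᴴ * partialDephase Q X).trace := by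
  rw [conjTranspose_partialDephase hherm, trace_partialDephase_mul_partialDephase horth]

end PartialDephase

section RankOneProj

variable {d : ℕ}

theorem conjTranspose_rankOneProj (v : Fin d → (Fin d → ℂ)) (i : Fin d) :
    (rankOneProj v i)ᴴ = rankOneProj v i := by
  simp [rankOneProj]

theorem rankOneProj_mul_rankOneProj {v : Fin d → (Fin d → ℂ)}
    (hv : ∀ i j, star (v i) ⬝ᵥ v j = if i = j then 1 else 0)
    (i j : Fin d) : rankOneProj v i * rankOneProj v j = if i = j then rankOneProj v i else 0 := by
  rw [rankOneProj, rankOneProj, vecMulVec_mul_vecMulVec, hv]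
  rcases eq_or_ne i j with rfl | hij
  · simp
  · simp [hij]

theorem dephase_eq_partialDephase (v : Fin d → (Fin d → ℂ)) :
    dephase v = partialDephase (rankOneProj v) :=
  rfl

theorem trace_mul_dephase (v : Fin d → (Fin d → ℂ)) (Y : Matrix (Fin d) (Fin d) ℂ) :
    (Y * dephase v Y).trace = ∑ j, (rankOneProj v j * Y).trace ^ 2 := by
  simp only [dephase, Finset.mul_sum, trace_sum]
  refine Finset.sum_congr rfl fun j _ => ?_
  rw [trace_mul_comm, rankOneProj, trace_vecMulVec_mul_vecMulVec_mul, trace_vecMulVec_mul, sq]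

end RankOneProj

section ZMat

variable {d r : ℕ} (v : Fin d → (Fin d → ℂ)) (Q : Fin r → Matrix (Fin d) (Fin d) ℂ)

theorem zMat_apply_eq_trace_mul_partialDephase (i j : Fin d) :
    zMat v Q i j = (rankOneProj v i * partialDephase Q (rankOneProj v j)).trace := by
  simp only [zMat, of_apply, partialDephase, Finset.mul_sum, trace_sum, Matrix.mul_assoc]

theorem zMat_apply_eq_sum (i j : Fin d) :
    zMat v Q i j = ∑ k, (star (v i) ⬝ᵥ Q k *ᵥ v j) * (star (v j) ⬝ᵥ Q k *ᵥ v i) := by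
  simp only [zMat, of_apply, trace_sum, rankOneProj, trace_vecMulVec_mul_vecMulVec_mul]

theorem zMat_apply_comm (i j : Fin d) : zMat v Q j i = zMat v Q i j := by
  simp only [zMat_apply_eq_sum, mul_comm]

theorem zMat_apply_im (hQ : ∀ k, (Q k)ᴴ = Q k) (i j : Fin d) : (zMat v Q i j).im = 0 := by
  rw [zMat_apply_eq_sum, Complex.im_sum]
  refine Finset.sum_eq_zero fun k _ => ?_
  rw [← hQ k, ← star_star_dotProduct_mulVec, hQ k, RCLike.star_def,
    ← Complex.normSq_eq_conj_mul_self]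
  exact Complex.ofReal_im _

end ZMat

theorem cgp_partial_dephasing_general {d r : ℕ}
    (v : Fin d → (Fin d → ℂ))
    (hv : ∀ i j, star (v i) ⬝ᵥ v j = if i = j then 1 else 0)
    (Q : Fin r → Matrix (Fin d) (Fin d) ℂ)
    (hQherm : ∀ k, (Q k)ᴴ = Q k)
    (hQorth : ∀ k l, Q k * Q l = if k = l then Q k else 0) :
    ((∀ i j, (zMat v Q i j).im = 0) ∧ (∀ i j, zMat v Q j i = zMat v Q i j))
    ∧ ∑ i, (((partialDephase Q (rankOneProj v i))ᴴ * partialDephase Q (rankOneProj v i)).trace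
          - ((dephase v (partialDephase Q (rankOneProj v i)))ᴴ *
              dephase v (partialDephase Q (rankOneProj v i))).trace)
        = (zMat v Q * (1 - zMat v Q)).trace := by
  refine ⟨⟨zMat_apply_im v Q hQherm, zMat_apply_comm v Q⟩, ?_⟩
  rw [trace_mul_one_sub]
  refine Finset.sum_congr rfl fun i _ => ?_
  have hY : (partialDephase Q (rankOneProj v i))ᴴ = partialDephase Q (rankOneProj v i) := by
    rw [conjTranspose_partialDephase hQherm, conjTranspose_rankOneProj]
  rw [trace_conjTranspose_partialDephase_mul_self hQherm hQorth, conjTranspose_rankOneProj,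
    ← zMat_apply_eq_trace_mul_partialDephase, dephase_eq_partialDephase,
    trace_conjTranspose_partialDephase_mul_self (conjTranspose_rankOneProj v)
      (rankOneProj_mul_rankOneProj hv), hY, ← dephase_eq_partialDephase, trace_mul_dephase]
  simp only [← zMat_apply_eq_trace_mul_partialDephase, sq, zMat_apply_comm v Q i]

/-- **2-norm CGP of a partially dephasing channel.**
Let `B = {v i}` be an orthonormal basis of `ℂ^d` and `B' = {Π_k}_{k=1}^r` a complete family
of orthogonal projectors, with partial dephasing superoperator `D_{B'}`.  Let
`Z_{ij} = Tr(∑ k, P_i Π_k P_j Π_k)`.  Then `Z` is real and symmetric, and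
`∑ i (⟨D_{B'} P_i, D_{B'} P_i⟩ − ⟨D_B D_{B'} P_i, D_B D_{B'} P_i⟩) = Tr[Z(I − Z)]`,
so the 2-norm CGP of `D_{B'}` w.r.t. `B` equals `Tr[Z(I − Z)] / (d(d+1))`. -/
theorem cgp_partial_dephasing {d r : ℕ}
    (v : Fin d → (Fin d → ℂ))
    (hv : ∀ i j, star (v i) ⬝ᵥ v j = if i = j then 1 else 0)
    (Q : Fin r → Matrix (Fin d) (Fin d) ℂ)
    (hQherm : ∀ k, (Q k)ᴴ = Q k)
    (hQorth : ∀ k l, Q k * Q l = if k = l then Q k else 0)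
    (hQsum : ∑ k, Q k = 1) :
    ((∀ i j, (zMat v Q i j).im = 0) ∧ (∀ i j, zMat v Q j i = zMat v Q i j))
    ∧ ∑ i, (((partialDephase Q (rankOneProj v i))ᴴ * partialDephase Q (rankOneProj v i)).trace
          - ((dephase v (partialDephase Q (rankOneProj v i)))ᴴ *
              dephase v (partialDephase Q (rankOneProj v i))).trace)
        = (zMat v Q * (1 - zMat v Q)).trace :=
  cgp_partial_dephasing_general v hv Q hQherm hQorth
end

section
/- Let B = {|i⟩}_{i=1}^d be an orthonormal basis of ℂ^d with projectors P_i, U a d×d unitary, and set |i'⟩ = U|i⟩. Let H be hermitian and {L_α}_α be matrices, all diagonal in the basis {|i'⟩}_i, with λ_{ij} = −i(E_i − E_j) + ∑_α ( (L_α)_{ii} · conj((L_α)_{jj}) − ½|(L_α)_{ii}|² − ½|(L_α)_{jj}|² ), where E_i = ⟨i'|H|i'⟩ and (L_α)_{ii} = ⟨i'|L_α|i'⟩, and let L be the associated Lindbladian. Then for every t ≥ 0, ∑_{i=1}^d ( ⟨e^{tL}(P_i), e^{tL}(P_i)⟩ − ⟨D_B(e^{tL}(P_i)), D_B(e^{tL}(P_i))⟩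 ) = Tr( X_U Λ(t) X_Uᵀ ) − Tr( Y(t) Y(t)ᵀ ), where (X_U)_{ij} = |⟨i|U|j⟩|², Λ(t) is the d×d matrix with entries Λ(t)_{ij} = exp(2 Re(λ_{ij}) t), and Y(t) is the d×d matrix with entries Y(t)_{ij} = ∑_{k,l} exp(λ_{kl} t) · U_{il} · conj(U_{ik}) · U_{jk} · conj(U_{jl}). -/
/-!
Since `H` and every `L_α` are diagonal in the rotated basis `w = U v`, each matrix unit
`|w k⟩⟨w l|` is an eigenvector of the Lindbladian, with eigenvalue `λ_{kl}`. Expanding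
`P_i = ∑ k l, ⟨w k|v i⟩⟨v i|w l⟩ |w k⟩⟨w l|` gives `e^{tL} P_i` explicitly, and since the
matrix units are Hilbert–Schmidt orthonormal its squared norm is
`∑ k l, |⟨v i|w k⟩|² e^{2 Re λ_{kl} t} |⟨v i|w l⟩|²`. Dephasing keeps the diagonal entries
`⟨v j|e^{tL} P_i|v j⟩ = Y(t)_{ij}`, so that norm is `∑ j, |Y(t)_{ij}|²`; and `Y(t)` is real
because `conj λ_{kl} = λ_{lk}` for hermitian `H`, whence `Tr(Y Yᵀ) = ∑ i j, |Y(t)_{ij}|²`.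
-/

open Matrix BigOperators

attribute [local instance] Matrix.frobeniusNormedAddCommGroup Matrix.frobeniusNormedSpace

instance frobeniusCLMIsTopologicalRing {d : ℕ} :
    IsTopologicalRing (Matrix (Fin d) (Fin d) ℂ →L[ℂ] Matrix (Fin d) (Fin d) ℂ) := by
  exact @NonUnitalSeminormedRing.toIsTopologicalRing _ (ContinuousLinearMap.toNormedRing (𝕜 := ℂ) (E := Matrix (Fin d) (Fin d) ℂ)).toNonUnitalNormedRing.toNonUnitalSeminormedRing

/-- The Lindbladian `L(ρ) = −i[H,ρ] + ∑ α (L_α ρ L_α† − ½{L_α† L_α, ρ})` as a continuous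
linear map on `d × d` complex matrices. -/
noncomputable def lindbladCLM {d N : ℕ} (H : Matrix (Fin d) (Fin d) ℂ)
    (L : Fin N → Matrix (Fin d) (Fin d) ℂ) :
    Matrix (Fin d) (Fin d) ℂ →L[ℂ] Matrix (Fin d) (Fin d) ℂ :=
  LinearMap.toContinuousLinearMap <|
    (-Complex.I) • (LinearMap.mulLeft ℂ H - LinearMap.mulRight ℂ H) +
      ∑ α, ((LinearMap.mulLeft ℂ (L α)).comp (LinearMap.mulRight ℂ (L α)ᴴ)
        - (1 / 2 : ℂ) • (LinearMap.mulLeft ℂ ((L α)ᴴ * L α)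
            + LinearMap.mulRight ℂ ((L α)ᴴ * L α)))

/-- The bistochastic matrix `(X_U)_{ij} = |⟨i|U|j⟩|²`. -/
noncomputable def xMat {d : ℕ} (v : Fin d → (Fin d → ℂ)) (U : Matrix (Fin d) (Fin d) ℂ) :
    Matrix (Fin d) (Fin d) ℝ :=
  Matrix.of fun i j => ‖star (v i) ⬝ᵥ (U *ᵥ v j)‖ ^ 2

/-- The matrix `Λ(t)_{ij} = exp(2 Re(λ_{ij}) t)`. -/
noncomputable def lamMat {d : ℕ} (lam : Fin d → Fin d → ℂ) (t : ℝ) :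
    Matrix (Fin d) (Fin d) ℝ :=
  Matrix.of fun i j => Real.exp (2 * (lam i j).re * t)

/-- The matrix `Y(t)_{ij} = ∑ k l, exp(λ_{kl} t) U_{il} conj(U_{ik}) U_{jk} conj(U_{jl})`,
where `U_{il} = ⟨i|U|l⟩` in the basis `{v i}`. -/
noncomputable def yMat {d : ℕ} (v : Fin d → (Fin d → ℂ)) (U : Matrix (Fin d) (Fin d) ℂ)
    (lam : Fin d → Fin d → ℂ) (t : ℝ) : Matrix (Fin d) (Fin d) ℂ :=
  Matrix.of fun i j => ∑ k, ∑ l, Complex.exp (lam k l * t)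
    * (star (v i) ⬝ᵥ (U *ᵥ v l)) * (starRingEnd ℂ) (star (v i) ⬝ᵥ (U *ᵥ v k))
    * (star (v j) ⬝ᵥ (U *ᵥ v k)) * (starRingEnd ℂ) (star (v j) ⬝ᵥ (U *ᵥ v l))

section OrthonormalExpansion

variable {R : Type*} [CommRing R] {n : Type*} [Fintype n]

theorem vecMulVec_mul_mul_vecMulVec (a b c e : n → R) (M : Matrix n n R) :
    vecMulVec a b * M * vecMulVec c e = (b ⬝ᵥ (M *ᵥ c)) • vecMulVec a e := by
  rw [vecMulVec_mul, vecMulVec_mul_vecMulVec, vecMulVec_smul, dotProduct_mulVec]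

variable [StarRing R]

theorem star_dotProduct_mulVec_vecMulVec (x y a b : n → R) :
    star x ⬝ᵥ (vecMulVec a b *ᵥ y) = (star x ⬝ᵥ a) * (b ⬝ᵥ y) := by
  rw [vecMulVec_mulVec, op_smul_eq_smul, dotProduct_smul, smul_eq_mul, mul_comm]

theorem star_dotProduct_conjTranspose_mulVec (M : Matrix n n R) (x y : n → R) :
    star x ⬝ᵥ (Mᴴ *ᵥ y) = star (star y ⬝ᵥ (M *ᵥ x)) := by
  rw [star_dotProduct, star_mulVec, conjTranspose_conjTranspose, dotProduct_mulVec]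

theorem sum_vecMulVec_star_self_eq_one [DecidableEq n] {w : n → n → R}
    (hw : ∀ i j, star (w i) ⬝ᵥ w j = if i = j then 1 else 0) :
    ∑ k, vecMulVec (w k) (star (w k)) = 1 := by
  have hW : (of w)ᴴᵀ * (of w)ᵀ = 1 := by
    ext i j
    simpa [mul_apply, dotProduct, one_apply] using hw i j
  calc ∑ k, vecMulVec (w k) (star (w k)) = (of w)ᵀ * (of w)ᴴᵀ := by
        ext a b
        simp [Matrix.sum_apply, vecMulVec_apply, mul_apply]
    _ = 1 := mul_eq_one_comm.mp hW

theorem star_mulVec_dotProduct_mulVec_of_mem_unitaryGroup [DecidableEq n] {U : Matrix n n ℂ}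
    (hU : U ∈ unitaryGroup n ℂ) (x y : n → ℂ) :
    star (U *ᵥ x) ⬝ᵥ (U *ᵥ y) = star x ⬝ᵥ y := by
  rw [star_mulVec, dotProduct_mulVec, vecMul_vecMul, ← star_eq_conjTranspose,
    mem_unitaryGroup_iff'.mp hU, vecMul_one]

end OrthonormalExpansion

section DiagonalIn

variable {R : Type*} [CommRing R] [StarRing R] {n : Type*} [Fintype n]

def IsDiagonalIn (w : n → n → R) (M : Matrix n n R) : Prop :=
  ∀ i j, i ≠ j → star (w i) ⬝ᵥ (M *ᵥ w j) = 0

theorem IsDiagonalIn.conjTranspose {w : n → n → R} {M : Matrix n n R} (h : IsDiagonalIn w M) :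
    IsDiagonalIn w Mᴴ := by
  intro i j hij
  rw [star_dotProduct_conjTranspose_mulVec, h j i hij.symm, star_zero]

variable [DecidableEq n] {w : n → n → R} (hw : ∑ k, vecMulVec (w k) (star (w k)) = 1)
include hw

theorem eq_sum_smul_of_sum_vecMulVec_eq_one (x : n → R) :
    x = ∑ k, (star (w k) ⬝ᵥ x) • w k := by
  calc x = (∑ k, vecMulVec (w k) (star (w k))) *ᵥ x := by rw [hw, one_mulVec]
    _ = ∑ k, (star (w k) ⬝ᵥ x) • w k := by
      simp only [sum_mulVec, vecMulVec_mulVec, op_smul_eq_smul]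

theorem eq_sum_sum_smul_vecMulVec_of_sum_vecMulVec_eq_one (M : Matrix n n R) :
    M = ∑ k, ∑ l, (star (w k) ⬝ᵥ (M *ᵥ w l)) • vecMulVec (w k) (star (w l)) := by
  calc M = (∑ k, vecMulVec (w k) (star (w k))) * M * ∑ l, vecMulVec (w l) (star (w l)) := by
        rw [hw, Matrix.one_mul, Matrix.mul_one]
    _ = _ := by
      simp only [Finset.sum_mul, Finset.mul_sum, vecMulVec_mul_mul_vecMulVec]
      exact Finset.sum_comm

theorem IsDiagonalIn.mulVec_eq_smul {M : Matrix n n R} (h : IsDiagonalIn w M) (k : n) :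
    M *ᵥ w k = (star (w k) ⬝ᵥ (M *ᵥ w k)) • w k := by
  conv_lhs => rw [eq_sum_smul_of_sum_vecMulVec_eq_one hw (M *ᵥ w k)]
  exact Finset.sum_eq_single k (fun j _ hj => by rw [h j k hj, zero_smul]) (by simp)

theorem IsDiagonalIn.mul_vecMulVec {M : Matrix n n R} (h : IsDiagonalIn w M) (k : n)
    (y : n → R) :
    M * vecMulVec (w k) y = (star (w k) ⬝ᵥ (M *ᵥ w k)) • vecMulVec (w k) y := by
  conv_lhs => rw [Matrix.mul_vecMulVec, h.mulVec_eq_smul hw, smul_vecMulVec]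

theorem IsDiagonalIn.vecMulVec_mul {M : Matrix n n R} (h : IsDiagonalIn w M) (x : n → R)
    (l : n) :
    vecMulVec x (star (w l)) * M = (star (w l) ⬝ᵥ (M *ᵥ w l)) • vecMulVec x (star (w l)) := by
  rw [Matrix.vecMulVec_mul, ← conjTranspose_conjTranspose M, vecMul_conjTranspose, star_star,
    h.conjTranspose.mulVec_eq_smul hw, star_smul, star_dotProduct_conjTranspose_mulVec,
    star_star, vecMulVec_smul, conjTranspose_conjTranspose]

end DiagonalIn

theorem trace_mul_mul_transpose {R : Type*} [CommSemiring R] {n : Type*} [Fintype n]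
    (A B : Matrix n n R) :
    (A * B * Aᵀ).trace = ∑ i, ∑ k, ∑ l, A i k * B k l * A i l := by
  simp only [trace, diag_apply, mul_apply, transpose_apply, Finset.sum_mul]
  exact Finset.sum_congr rfl fun i _ => Finset.sum_comm

section HilbertSchmidt

variable {R : Type*} [CommRing R] [StarRing R] {n : Type*} [Fintype n]

theorem trace_conjTranspose_vecMulVec_mul_vecMulVec [DecidableEq n] {w : n → n → R}
    (hw : ∀ i j, star (w i) ⬝ᵥ w j = if i = j then 1 else 0) (k l k' l' : n) :
    ((vecMulVec (w k) (star (w l)))ᴴ * vecMulVec (w k') (star (w l'))).trace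
      = if (k, l) = (k', l') then 1 else 0 := by
  rw [conjTranspose_vecMulVec, star_star, vecMulVec_mul_vecMulVec, trace_vecMulVec,
    dotProduct_smul, hw, dotProduct_comm, hw, smul_eq_mul]
  by_cases hk : k = k' <;> by_cases hl : l = l' <;> simp [hk, hl, Ne.symm]

variable {ι : Type*} [Fintype ι] [DecidableEq ι]

theorem trace_conjTranspose_mul_self_sum_smul {E : ι → Matrix n n ℂ}
    (hE : ∀ a b, ((E a)ᴴ * E b).trace = if a = b then 1 else 0) (x : ι → ℂ) :
    ((∑ a, x a • E a)ᴴ * ∑ a, x a • E a).trace = ∑ a, (‖x a‖ : ℂ) ^ 2 := by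
  have hterm : ∀ a b, ((x a • E a)ᴴ * (x b • E b)).trace
      = star (x a) * x b * if a = b then 1 else 0 := by
    intro a b
    rw [conjTranspose_smul, Matrix.smul_mul, Matrix.mul_smul, trace_smul, trace_smul, hE,
      smul_eq_mul, smul_eq_mul, mul_assoc]
  simp only [conjTranspose_sum, Finset.sum_mul, Finset.mul_sum, trace_sum, hterm, mul_ite,
    mul_one, mul_zero, Finset.sum_ite_eq', Finset.mem_univ, if_true, RCLike.star_def,
    Complex.conj_mul']

theorem trace_mul_transpose_of_forall_star_eq {Y : Matrix n n ℂ}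
    (hY : ∀ i j, star (Y i j) = Y i j) :
    (Y * Yᵀ).trace = ∑ i, ∑ j, (‖Y i j‖ : ℂ) ^ 2 := by
  simp only [trace, diag_apply, mul_apply, transpose_apply, ← Complex.conj_mul',
    ← RCLike.star_def, hY]

end HilbertSchmidt

theorem exp_apply_eq_smul_of_apply_eq_smul {𝕂 : Type*} [RCLike 𝕂] {E : Type*}
    [NormedAddCommGroup E] [NormedSpace 𝕂 E] [CompleteSpace E] {T : E →L[𝕂] E} {x : E} {c : 𝕂}
    (h : T x = c • x) : NormedSpace.exp T x = NormedSpace.exp c • x := by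
  have hpow : ∀ m : ℕ, (T ^ m) x = c ^ m • x := by
    intro m
    induction m with
    | zero => simp
    | succ m ih => rw [pow_succ', mul_apply_eq_comp, ih, map_smul, h, smul_smul,
        pow_succ]
  have hT := (NormedSpace.exp_series_hasSum_exp' (𝕂 := 𝕂) T).mapL
    (ContinuousLinearMap.apply 𝕂 E x)
  have hc := (NormedSpace.exp_series_hasSum_exp' (𝕂 := 𝕂) c).smul_const x
  refine hT.unique ?_
  simpa [hpow, smul_smul] using hc

section Lindblad

variable {d N : ℕ}

theorem dephase_eq_sum_smul_rankOneProj (v : Fin d → Fin d → ℂ)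
    (X : Matrix (Fin d) (Fin d) ℂ) :
    dephase v X = ∑ j, (star (v j) ⬝ᵥ (X *ᵥ v j)) • rankOneProj v j :=
  Finset.sum_congr rfl fun _ _ => vecMulVec_mul_mul_vecMulVec _ _ _ _ _

theorem star_yMat_apply (v : Fin d → Fin d → ℂ) (U : Matrix (Fin d) (Fin d) ℂ)
    {lam : Fin d → Fin d → ℂ} (hlam : ∀ k l, star (lam k l) = lam l k) (t : ℝ) (i j : Fin d) :
    star (yMat v U lam t i j) = yMat v U lam t i j := by
  have hlam' : ∀ k l, (starRingEnd ℂ) (lam k l) = lam l k := hlam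
  simp only [yMat, of_apply, star_sum, star_mul', Complex.star_def, Complex.conj_conj,
    ← Complex.exp_conj, map_mul, Complex.conj_ofReal, hlam']
  rw [Finset.sum_comm]
  exact Finset.sum_congr rfl fun k _ => Finset.sum_congr rfl fun l _ => by ring

noncomputable def lindbladEigenvalue (w : Fin d → Fin d → ℂ) (H : Matrix (Fin d) (Fin d) ℂ)
    (L : Fin N → Matrix (Fin d) (Fin d) ℂ) (i j : Fin d) : ℂ :=
  -Complex.I * ((star (w i) ⬝ᵥ (H *ᵥ w i)) - (star (w j) ⬝ᵥ (H *ᵥ w j)))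
    + ∑ α, ((star (w i) ⬝ᵥ (L α *ᵥ w i)) * (starRingEnd ℂ) (star (w j) ⬝ᵥ (L α *ᵥ w j))
        - (1 / 2 : ℂ) * (‖star (w i) ⬝ᵥ (L α *ᵥ w i)‖ : ℂ) ^ 2
        - (1 / 2 : ℂ) * (‖star (w j) ⬝ᵥ (L α *ᵥ w j)‖ : ℂ) ^ 2)

theorem star_lindbladEigenvalue (w : Fin d → Fin d → ℂ) {H : Matrix (Fin d) (Fin d) ℂ}
    (hH : Hᴴ = H) (L : Fin N → Matrix (Fin d) (Fin d) ℂ) (k l : Fin d) :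
    star (lindbladEigenvalue w H L k l) = lindbladEigenvalue w H L l k := by
  have hE : ∀ m, star (star (w m) ⬝ᵥ (H *ᵥ w m)) = star (w m) ⬝ᵥ (H *ᵥ w m) := fun m => by
    rw [← star_dotProduct_conjTranspose_mulVec, hH]
  simp only [lindbladEigenvalue, star_add, star_mul', star_sub, star_neg, star_sum, hE,
    Complex.star_def, Complex.conj_I, Complex.conj_conj, map_pow, Complex.conj_ofReal,
    map_div₀, map_one, map_ofNat]
  congr 1
  · ring
  · exact Finset.sum_congr rfl fun α _ => by ring

theorem lindbladCLM_apply (H : Matrix (Fin d) (Fin d) ℂ) (L : Fin N → Matrix (Fin d) (Fin d) ℂ)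
    (ρ : Matrix (Fin d) (Fin d) ℂ) :
    lindbladCLM H L ρ = -Complex.I • (H * ρ - ρ * H)
      + ∑ α, (L α * ρ * (L α)ᴴ - (1 / 2 : ℂ) • ((L α)ᴴ * L α * ρ + ρ * ((L α)ᴴ * L α))) := by
  simp only [lindbladCLM, LinearMap.coe_toContinuousLinearMap', LinearMap.add_apply,
    LinearMap.smul_apply, LinearMap.sub_apply, LinearMap.sum_apply, LinearMap.comp_apply,
    LinearMap.mulLeft_apply, LinearMap.mulRight_apply, Matrix.mul_assoc]

variable {w : Fin d → Fin d → ℂ} (hw : ∀ i j, star (w i) ⬝ᵥ w j = if i = j then 1 else 0)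
  {H : Matrix (Fin d) (Fin d) ℂ} (hH : IsDiagonalIn w H)
  {L : Fin N → Matrix (Fin d) (Fin d) ℂ} (hL : ∀ α, IsDiagonalIn w (L α))
include hw hH hL

theorem lindbladCLM_vecMulVec (k l : Fin d) :
    lindbladCLM H L (vecMulVec (w k) (star (w l)))
      = lindbladEigenvalue w H L k l • vecMulVec (w k) (star (w l)) := by
  have hcomp := sum_vecMulVec_star_self_eq_one hw
  set E := vecMulVec (w k) (star (w l))
  have hdiss : ∀ α, L α * E * (L α)ᴴ - (1 / 2 : ℂ) • ((L α)ᴴ * L α * E + E * ((L α)ᴴ * L α))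
      = ((star (w k) ⬝ᵥ (L α *ᵥ w k)) * (starRingEnd ℂ) (star (w l) ⬝ᵥ (L α *ᵥ w l))
        - (1 / 2 : ℂ) * (‖star (w k) ⬝ᵥ (L α *ᵥ w k)‖ : ℂ) ^ 2
        - (1 / 2 : ℂ) * (‖star (w l) ⬝ᵥ (L α *ᵥ w l)‖ : ℂ) ^ 2) • E := by
    intro α
    set a := star (w k) ⬝ᵥ (L α *ᵥ w k)
    set b := star (w l) ⬝ᵥ (L α *ᵥ w l)
    have hLE : L α * E = a • E := (hL α).mul_vecMulVec hcomp k _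
    have hEL : E * L α = b • E := (hL α).vecMulVec_mul hcomp _ l
    have hLhE : (L α)ᴴ * E = star a • E := by
      rw [(hL α).conjTranspose.mul_vecMulVec hcomp, star_dotProduct_conjTranspose_mulVec]
    have hELh : E * (L α)ᴴ = star b • E := by
      rw [(hL α).conjTranspose.vecMulVec_mul hcomp, star_dotProduct_conjTranspose_mulVec]
    rw [hLE, Matrix.smul_mul, hELh, Matrix.mul_assoc (L α)ᴴ, hLE, Matrix.mul_smul, hLhE,
      ← Matrix.mul_assoc E, hELh, Matrix.smul_mul, hEL, ← Complex.conj_mul', ← Complex.conj_mul',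
      ← RCLike.star_def]
    module
  rw [lindbladCLM_apply, hH.mul_vecMulVec hcomp, hH.vecMulVec_mul hcomp,
    Finset.sum_congr rfl fun α _ => hdiss α, ← Finset.sum_smul, lindbladEigenvalue]
  module

theorem exp_smul_lindbladCLM_vecMulVec (t : ℝ) (k l : Fin d) :
    NormedSpace.exp (t • lindbladCLM H L) (vecMulVec (w k) (star (w l)))
      = Complex.exp (lindbladEigenvalue w H L k l * t) • vecMulVec (w k) (star (w l)) := by
  have h : (t • lindbladCLM H L) (vecMulVec (w k) (star (w l)))
      = (lindbladEigenvalue w H L k l * t) • vecMulVec (w k) (star (w l)) := by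
    rw [_root_.smul_apply, lindbladCLM_vecMulVec hw hH hL, ← smul_assoc, Complex.real_smul,
      mul_comm]
  rw [Complex.exp_eq_exp_ℂ]
  exact exp_apply_eq_smul_of_apply_eq_smul h

theorem exp_smul_lindbladCLM_rankOneProj (v : Fin d → Fin d → ℂ) (t : ℝ) (i : Fin d) :
    NormedSpace.exp (t • lindbladCLM H L) (rankOneProj v i)
      = ∑ k, ∑ l, ((star (w k) ⬝ᵥ v i) * (star (v i) ⬝ᵥ w l)
          * Complex.exp (lindbladEigenvalue w H L k l * t)) • vecMulVec (w k) (star (w l)) := by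
  conv_lhs => rw [rankOneProj, eq_sum_sum_smul_vecMulVec_of_sum_vecMulVec_eq_one
    (sum_vecMulVec_star_self_eq_one hw) (vecMulVec (v i) (star (v i)))]
  simp only [map_sum, map_smul, exp_smul_lindbladCLM_vecMulVec hw hH hL, smul_smul,
    star_dotProduct_mulVec_vecMulVec]

theorem trace_conjTranspose_mul_self_exp_smul_lindbladCLM_rankOneProj
    {v : Fin d → Fin d → ℂ} {U : Matrix (Fin d) (Fin d) ℂ} (hwU : ∀ i, w i = U *ᵥ v i)
    (t : ℝ) (i : Fin d) :
    ((NormedSpace.exp (t • lindbladCLM H L) (rankOneProj v i))ᴴ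
        * NormedSpace.exp (t • lindbladCLM H L) (rankOneProj v i)).trace
      = ∑ k, ∑ l, ((xMat v U i k * lamMat (lindbladEigenvalue w H L) t k l * xMat v U i l : ℝ)
          : ℂ) := by
  have hE : ∀ p q : Fin d × Fin d, ((vecMulVec (w p.1) (star (w p.2)))ᴴ
      * vecMulVec (w q.1) (star (w q.2))).trace = if p = q then 1 else 0 :=
    fun p q => trace_conjTranspose_vecMulVec_mul_vecMulVec hw p.1 p.2 q.1 q.2
  rw [exp_smul_lindbladCLM_rankOneProj hw hH hL, ← Fintype.sum_prod_type',
    trace_conjTranspose_mul_self_sum_smul hE]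
  simp only [Fintype.sum_prod_type]
  refine Finset.sum_congr rfl fun k _ => Finset.sum_congr rfl fun l _ => ?_
  have hexp : ‖Complex.exp (lindbladEigenvalue w H L k l * t)‖ ^ 2
      = Real.exp (2 * (lindbladEigenvalue w H L k l).re * t) := by
    rw [Complex.norm_exp, ← Real.exp_nat_mul, Complex.re_mul_ofReal]
    congr 1
    push_cast
    ring
  rw [star_dotProduct (w k), norm_mul, norm_mul, norm_star, ← Complex.ofReal_pow, mul_pow,
    mul_pow, hexp]
  simp only [xMat, lamMat, of_apply, ← hwU]
  congr 1
  ring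

theorem dephase_exp_smul_lindbladCLM_rankOneProj
    {v : Fin d → Fin d → ℂ} {U : Matrix (Fin d) (Fin d) ℂ} (hwU : ∀ i, w i = U *ᵥ v i)
    (t : ℝ) (i : Fin d) :
    dephase v (NormedSpace.exp (t • lindbladCLM H L) (rankOneProj v i))
      = ∑ j, yMat v U (lindbladEigenvalue w H L) t i j • rankOneProj v j := by
  rw [dephase_eq_sum_smul_rankOneProj, exp_smul_lindbladCLM_rankOneProj hw hH hL]
  refine Finset.sum_congr rfl fun j _ => congrArg (· • rankOneProj v j) ?_
  simp only [sum_mulVec, dotProduct_sum, smul_mulVec, dotProduct_smul, smul_eq_mul,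
    star_dotProduct_mulVec_vecMulVec, yMat, of_apply, ← hwU]
  refine Finset.sum_congr rfl fun k _ => Finset.sum_congr rfl fun l _ => ?_
  rw [star_dotProduct (w k), star_dotProduct (w l), Complex.star_def]
  ring

end Lindblad

theorem cgp_lindblad_time_general {d N : ℕ}
    (v : Fin d → (Fin d → ℂ))
    (hv : ∀ i j, star (v i) ⬝ᵥ v j = if i = j then 1 else 0)
    (U : Matrix (Fin d) (Fin d) ℂ) (hU : U ∈ Matrix.unitaryGroup (Fin d) ℂ)
    (w : Fin d → (Fin d → ℂ)) (hw : ∀ i, w i = U *ᵥ v i)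
    (H : Matrix (Fin d) (Fin d) ℂ) (hH : Hᴴ = H)
    (hHdiag : ∀ i j, i ≠ j → star (w i) ⬝ᵥ (H *ᵥ w j) = 0)
    (L : Fin N → Matrix (Fin d) (Fin d) ℂ)
    (hLdiag : ∀ α, ∀ i j, i ≠ j → star (w i) ⬝ᵥ (L α *ᵥ w j) = 0)
    (lam : Fin d → Fin d → ℂ)
    (hlam : ∀ i j, lam i j = -Complex.I
        * ((star (w i) ⬝ᵥ (H *ᵥ w i)) - (star (w j) ⬝ᵥ (H *ᵥ w j)))
      + ∑ α, ((star (w i) ⬝ᵥ (L α *ᵥ w i)) * (starRingEnd ℂ) (star (w j) ⬝ᵥ (L α *ᵥ w j))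
          - (1 / 2 : ℂ) * (‖star (w i) ⬝ᵥ (L α *ᵥ w i)‖ : ℂ) ^ 2
          - (1 / 2 : ℂ) * (‖star (w j) ⬝ᵥ (L α *ᵥ w j)‖ : ℂ) ^ 2))
    (t : ℝ) :
    ∑ i, (((NormedSpace.exp (t • lindbladCLM H L) (rankOneProj v i))ᴴ *
            NormedSpace.exp (t • lindbladCLM H L) (rankOneProj v i)).trace
        - ((dephase v (NormedSpace.exp (t • lindbladCLM H L) (rankOneProj v i)))ᴴ *
            dephase v (NormedSpace.exp (t • lindbladCLM H L) (rankOneProj v i))).trace)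
      = (((xMat v U * lamMat lam t * (xMat v U)ᵀ).trace : ℝ) : ℂ)
        - (yMat v U lam t * (yMat v U lam t)ᵀ).trace := by
  obtain rfl : lam = lindbladEigenvalue w H L := funext fun i => funext (hlam i)
  have hw_on : ∀ i j, star (w i) ⬝ᵥ w j = if i = j then 1 else 0 := fun i j => by
    rw [hw, hw, star_mulVec_dotProduct_mulVec_of_mem_unitaryGroup hU, hv]
  have hP : ∀ a b, ((rankOneProj v a)ᴴ * rankOneProj v b).trace = if a = b then 1 else 0 :=
    fun a b => (trace_conjTranspose_vecMulVec_mul_vecMulVec hv a a b b).trans (by simp)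
  have hY := star_yMat_apply v U (star_lindbladEigenvalue w hH L) t
  simp only [Finset.sum_sub_distrib,
    trace_conjTranspose_mul_self_exp_smul_lindbladCLM_rankOneProj hw_on hHdiag hLdiag hw,
    dephase_exp_smul_lindbladCLM_rankOneProj hw_on hHdiag hLdiag hw,
    trace_conjTranspose_mul_self_sum_smul hP, trace_mul_mul_transpose,
    trace_mul_transpose_of_forall_star_eq hY]
  push_cast
  rfl

/-- **2-norm CGP of a maximally dephasing Lindbladian evolution as a function of time.**
Let `B = {v i}` be an orthonormal basis, `U` a unitary, `B' = {U (v i)}` the rotated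
basis, `H` hermitian and every `L_α` diagonal in `B'`, with decay rates `λ_{ij}`.  Then
for every `t ≥ 0`,
`∑ i (⟨e^{tL} P_i, e^{tL} P_i⟩ − ⟨D_B e^{tL} P_i, D_B e^{tL} P_i⟩)
  = Tr(X_U Λ(t) X_Uᵀ) − Tr(Y(t) Y(t)ᵀ)`. -/
theorem cgp_lindblad_time {d N : ℕ}
    (v : Fin d → (Fin d → ℂ))
    (hv : ∀ i j, star (v i) ⬝ᵥ v j = if i = j then 1 else 0)
    (U : Matrix (Fin d) (Fin d) ℂ) (hU : U ∈ Matrix.unitaryGroup (Fin d) ℂ)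
    (w : Fin d → (Fin d → ℂ)) (hw : ∀ i, w i = U *ᵥ v i)
    (H : Matrix (Fin d) (Fin d) ℂ) (hH : Hᴴ = H)
    (hHdiag : ∀ i j, i ≠ j → star (w i) ⬝ᵥ (H *ᵥ w j) = 0)
    (L : Fin N → Matrix (Fin d) (Fin d) ℂ)
    (hLdiag : ∀ α, ∀ i j, i ≠ j → star (w i) ⬝ᵥ (L α *ᵥ w j) = 0)
    (lam : Fin d → Fin d → ℂ)
    (hlam : ∀ i j, lam i j = -Complex.I
        * ((star (w i) ⬝ᵥ (H *ᵥ w i)) - (star (w j) ⬝ᵥ (H *ᵥ w j)))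
      + ∑ α, ((star (w i) ⬝ᵥ (L α *ᵥ w i)) * (starRingEnd ℂ) (star (w j) ⬝ᵥ (L α *ᵥ w j))
          - (1 / 2 : ℂ) * (‖star (w i) ⬝ᵥ (L α *ᵥ w i)‖ : ℂ) ^ 2
          - (1 / 2 : ℂ) * (‖star (w j) ⬝ᵥ (L α *ᵥ w j)‖ : ℂ) ^ 2))
    (t : ℝ) (ht : 0 ≤ t) :
    ∑ i, (((NormedSpace.exp (t • lindbladCLM H L) (rankOneProj v i))ᴴ *
            NormedSpace.exp (t • lindbladCLM H L) (rankOneProj v i)).trace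
        - ((dephase v (NormedSpace.exp (t • lindbladCLM H L) (rankOneProj v i)))ᴴ *
            dephase v (NormedSpace.exp (t • lindbladCLM H L) (rankOneProj v i))).trace)
      = (((xMat v U * lamMat lam t * (xMat v U)ᵀ).trace : ℝ) : ℂ)
        - (yMat v U lam t * (yMat v U lam t)ᵀ).trace :=
  cgp_lindblad_time_general v hv U hU w hw H hH hHdiag L hLdiag lam hlam t
end
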